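/- arXiv:2605.06129 — 6 statements merged into one kernel-verified Lean document; each statement's English description precedes it below -/
import Mathlib

section
/- Let (Ω,𝖥,ℙ) be a probability space and ℱ a sub-σ-algebra of 𝖥. Let (X,d) be a complete separable metric space, let φ : X × X → [0,∞) be a Carathéodory distance, and let S ⊆ X be a nonempty Borel set. Then for every ℱ-measurable random variable x : Ω → X and every ε > 0, there exists an ℱ-measurable random variable s : Ω → X such that s ∈ S almost surely and φ(s, x) ≤ dist^φ_S(x) + ε almost surely. -/
open MeasureTheory Set

/-- `dist^φ_S(x) := inf_{s ∈ S} φ(s, x)`. -/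
noncomputable def distPhi {X : Type*} (φ : X → X → ℝ) (S : Set X) (x : X) : ℝ :=
  ⨅ s : S, φ s x

/-- (Measurable almost-sure approximations of `dist^φ_S`.)
Let `(Ω,𝖥,ℙ)` be a probability space, `ℱ ⊆ 𝖥` a sub-σ-algebra, `X` a complete separable
metric space, `φ` a Carathéodory distance and `S ⊆ X` nonempty Borel. Then for every
`ℱ`-measurable `x : Ω → X` and every `ε > 0` there is an `ℱ`-measurable `s : Ω → X` with
`s ∈ S` a.s. and `φ(s, x) ≤ dist^φ_S(x) + ε` a.s. -/
theorem stmt_3 {Ω : Type*} {m : MeasurableSpace Ω} (ℙ : Measure Ω) [IsProbabilityMeasure ℙ]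
    (𝒢 : MeasurableSpace Ω) (h𝒢 : 𝒢 ≤ m)
    {X : Type*} [MetricSpace X] [CompleteSpace X] [TopologicalSpace.SeparableSpace X]
    [MeasurableSpace X] [BorelSpace X]
    (φ : X → X → ℝ) (hφ_nonneg : ∀ x y : X, 0 ≤ φ x y)
    (hφ_cont : ∀ y : X, Continuous (fun x => φ x y))
    (hφ_meas : ∀ x : X, Measurable (fun y => φ x y))
    (S : Set X) (hS_ne : S.Nonempty) (hS_meas : MeasurableSet S)
    (x : Ω → X) (hx : Measurable[𝒢] x) (ε : ℝ) (hε : 0 < ε) :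
    ∃ s : Ω → X, Measurable[𝒢] s ∧ (∀ᵐ ω ∂ℙ, s ω ∈ S) ∧
      (∀ᵐ ω ∂ℙ, φ (s ω) (x ω) ≤ distPhi φ S (x ω) + ε) := by
  classical
  -- a countable dense sequence in S
  haveI : Nonempty S := hS_ne.to_subtype
  have hd' : DenseRange (TopologicalSpace.denseSeq S) := TopologicalSpace.denseRange_denseSeq S
  set d : ℕ → X := fun n => (TopologicalSpace.denseSeq S n : X) with hd_def
  have hdS : ∀ n, d n ∈ S := fun n => (TopologicalSpace.denseSeq S n).2
  -- the countable infimum ψ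
  set ψ : X → ℝ := fun y => ⨅ n, φ (d n) y with hψ_def
  have hbdd : ∀ y : X, BddBelow (Set.range fun n => φ (d n) y) :=
    fun y => ⟨0, fun r ⟨n, hn⟩ => hn ▸ hφ_nonneg _ _⟩
  have hbddS : ∀ y : X, BddBelow (Set.range fun s : S => φ s y) :=
    fun y => ⟨0, fun r ⟨n, hn⟩ => hn ▸ hφ_nonneg _ _⟩
  -- ψ = distPhi φ S
  have hψ_eq : ∀ y, ψ y = distPhi φ S y := by
    intro y
    apply le_antisymm
    · -- ψ y ≤ φ s y for every s ∈ S, by density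
      refine le_ciInf fun s => ?_
      by_contra h
      push_neg at h
      -- open set where φ · y < ψ y
      have hU : IsOpen {t : X | φ t y < ψ y} := isOpen_lt (hφ_cont y) continuous_const
      have hU' : IsOpen ((fun t : S => (t : X)) ⁻¹' {t : X | φ t y < ψ y}) :=
        hU.preimage continuous_subtype_val
      obtain ⟨n, hn⟩ := hd'.exists_mem_open hU' ⟨s, h⟩
      have : ψ y ≤ φ (d n) y := ciInf_le (hbdd y) n
      exact absurd hn (not_lt.2 this)
    · exact le_ciInf fun n => ciInf_le (hbddS y) ⟨d n, hdS n⟩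
  -- measurability of ψ
  have hψ_meas : Measurable ψ := Measurable.iInf fun n => hφ_meas (d n)
  -- the selection index
  have h_ex : ∀ y : X, ∃ n, φ (d n) y < ψ y + ε := by
    intro y
    have : ψ y < ψ y + ε := lt_add_of_pos_right _ hε
    exact exists_lt_of_ciInf_lt this
  set N : X → ℕ := fun y => Nat.find (h_ex y) with hN_def
  have hN_meas : Measurable N :=
    measurable_find h_ex fun n =>
      measurableSet_lt (hφ_meas (d n)) (hψ_meas.add_const ε)
  set g : X → X := fun y => d (N y) with hg_def
  have hg_meas : Measurable g := (measurable_from_top (f := d)).comp hN_meas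
  refine ⟨fun ω => g (x ω), hg_meas.comp hx, ?_, ?_⟩
  · exact Filter.Eventually.of_forall fun ω => hdS _
  · refine Filter.Eventually.of_forall fun ω => ?_
    have h1 := (Nat.find_spec (h_ex (x ω))).le
    calc φ (g (x ω)) (x ω) ≤ ψ (x ω) + ε := h1
      _ = distPhi φ S (x ω) + ε := by rw [hψ_eq]
end

section
/- Let (Ω,𝖥,ℙ) be a probability space and ℱ a sub-σ-algebra of 𝖥. Let (X,d) be a complete separable metric space, let φ : X × X → [0,∞) be a Carathéodory distance, and let S ⊆ X be a nonempty Borel set. Then for every ℱ-measurable random variable x : Ω → X and every ε > 0, there exists an ℱ-measurable random variable s : Ω → X such that s ∈ S almost surely and E[φ(s, x)] ≤ E[dist^φ_S(x)] + ε, where the expectations are Lebesgue integrals with values in [0,∞]. -/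
open MeasureTheory Set

/-- (Measurable approximations of `dist^φ_S` in mean.)
Let `(Ω,𝖥,ℙ)` be a probability space, `ℱ ⊆ 𝖥` a sub-σ-algebra, `X` a complete separable
metric space, `φ` a Carathéodory distance and `S ⊆ X` nonempty Borel. Then for every
`ℱ`-measurable `x : Ω → X` and every `ε > 0` there is an `ℱ`-measurable `s : Ω → X` with
`s ∈ S` a.s. and `E[φ(s,x)] ≤ E[dist^φ_S(x)] + ε`, expectations being Lebesgue integrals
with values in `[0,∞]`. -/
theorem stmt_4 {Ω : Type*} {m : MeasurableSpace Ω} (ℙ : Measure Ω) [IsProbabilityMeasure ℙ]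
    (𝒢 : MeasurableSpace Ω) (h𝒢 : 𝒢 ≤ m)
    {X : Type*} [MetricSpace X] [CompleteSpace X] [TopologicalSpace.SeparableSpace X]
    [MeasurableSpace X] [BorelSpace X]
    (φ : X → X → ℝ) (hφ_nonneg : ∀ x y : X, 0 ≤ φ x y)
    (hφ_cont : ∀ y : X, Continuous (fun x => φ x y))
    (hφ_meas : ∀ x : X, Measurable (fun y => φ x y))
    (S : Set X) (hS_ne : S.Nonempty) (hS_meas : MeasurableSet S)
    (x : Ω → X) (hx : Measurable[𝒢] x) (ε : ℝ) (hε : 0 < ε) :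
    ∃ s : Ω → X, Measurable[𝒢] s ∧ (∀ᵐ ω ∂ℙ, s ω ∈ S) ∧
      (∫⁻ ω, ENNReal.ofReal (φ (s ω) (x ω)) ∂ℙ) ≤
        (∫⁻ ω, ENNReal.ofReal (distPhi φ S (x ω)) ∂ℙ) + ENNReal.ofReal ε := by
  classical
  -- countable dense subset of S
  obtain ⟨T, hTS, hTc, hST⟩ :=
    (TopologicalSpace.IsSeparable.of_separableSpace S).exists_countable_dense_subset
  have hTne : T.Nonempty := by
    rcases Set.eq_empty_or_nonempty T with h | h
    · rcases hS_ne with ⟨a, ha⟩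
      rw [h, closure_empty, Set.subset_empty_iff] at hST
      exact absurd ha (hST ▸ Set.notMem_empty a)
    · exact h
  obtain ⟨f, hf⟩ := hTc.exists_eq_range hTne
  haveI : Nonempty S := hS_ne.to_subtype
  have hfS : ∀ n, f n ∈ S := fun n => hTS (hf ▸ Set.mem_range_self n)
  have hdist_nonneg : ∀ y, 0 ≤ distPhi φ S y := fun y =>
    Real.iInf_nonneg fun s => hφ_nonneg s y
  -- key: pointwise ε-optimal choice from the countable dense set
  have key : ∀ y : X, ∃ n, φ (f n) y < distPhi φ S y + ε := by
    intro y
    have h1 : distPhi φ S y < distPhi φ S y + ε := by linarith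
    obtain ⟨⟨s, hsS⟩, hs⟩ := exists_lt_of_ciInf_lt h1
    have hU : IsOpen ((fun z => φ z y) ⁻¹' Set.Iio (distPhi φ S y + ε)) :=
      (hφ_cont y).isOpen_preimage _ isOpen_Iio
    have hsU : s ∈ (fun z => φ z y) ⁻¹' Set.Iio (distPhi φ S y + ε) := hs
    have hscl : s ∈ closure T := hST hsS
    obtain ⟨t, htU, htT⟩ := mem_closure_iff.mp hscl _ hU hsU
    rw [hf] at htT
    obtain ⟨n, rfl⟩ := htT
    exact ⟨n, htU⟩
  have hmeas_p : ∀ n, MeasurableSet[𝒢] {ω | φ (f n) (x ω) < distPhi φ S (x ω) + ε} := by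
    intro n
    have h1 : Measurable[𝒢] fun ω => φ (f n) (x ω) := (hφ_meas (f n)).comp hx
    have h2 : Measurable[𝒢] fun ω => distPhi φ S (x ω) + ε := by
      have hd : Measurable fun y => distPhi φ S y := by
        have heq : ∀ y, distPhi φ S y = ⨅ n, φ (f n) y := by
          intro y
          have hbdd : BddBelow (Set.range fun s : S => φ s y) := by
            refine ⟨0, ?_⟩; rintro r ⟨s, rfl⟩; exact hφ_nonneg _ _
          have hbdd' : BddBelow (Set.range fun n : ℕ => φ (f n) y) := by
            refine ⟨0, ?_⟩; rintro r ⟨n, rfl⟩; exact hφ_nonneg _ _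
          apply le_antisymm
          · apply le_ciInf
            intro n
            exact ciInf_le hbdd ⟨f n, hfS n⟩
          · refine le_of_forall_pos_le_add fun δ hδ => ?_
            have h1 : distPhi φ S y < distPhi φ S y + δ := by linarith
            obtain ⟨⟨s, hsS⟩, hs⟩ := exists_lt_of_ciInf_lt h1
            have hU : IsOpen ((fun z => φ z y) ⁻¹' Set.Iio (distPhi φ S y + δ)) :=
              (hφ_cont y).isOpen_preimage _ isOpen_Iio
            obtain ⟨t, htU, htT⟩ := mem_closure_iff.mp (hST hsS) _ hU hs
            rw [hf] at htT
            obtain ⟨n, rfl⟩ := htT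
            exact le_trans (ciInf_le hbdd' n) htU.le
        simp only [heq]
        exact Measurable.iInf fun n => hφ_meas (f n)
      exact ((hd.comp hx).add measurable_const)
    exact measurableSet_lt h1 h2
  refine ⟨fun ω => f (Nat.find (key (x ω))), ?_, ?_, ?_⟩
  · exact Measurable.find (f := fun n (_ : Ω) => f n)
      (fun n => measurable_const) hmeas_p (fun ω => key (x ω))
  · exact Filter.Eventually.of_forall fun ω => hfS _
  · have hpt : ∀ ω, ENNReal.ofReal (φ (f (Nat.find (key (x ω)))) (x ω)) ≤
        ENNReal.ofReal (distPhi φ S (x ω)) + ENNReal.ofReal ε := by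
      intro ω
      have := (Nat.find_spec (key (x ω))).le
      calc ENNReal.ofReal (φ (f (Nat.find (key (x ω)))) (x ω))
          ≤ ENNReal.ofReal (distPhi φ S (x ω) + ε) := ENNReal.ofReal_le_ofReal this
        _ = ENNReal.ofReal (distPhi φ S (x ω)) + ENNReal.ofReal ε :=
            ENNReal.ofReal_add (hdist_nonneg _) hε.le
    calc (∫⁻ ω, ENNReal.ofReal (φ (f (Nat.find (key (x ω)))) (x ω)) ∂ℙ)
        ≤ ∫⁻ ω, ENNReal.ofReal (distPhi φ S (x ω)) + ENNReal.ofReal ε ∂ℙ :=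
          lintegral_mono hpt
      _ = (∫⁻ ω, ENNReal.ofReal (distPhi φ S (x ω)) ∂ℙ) + ∫⁻ _, ENNReal.ofReal ε ∂ℙ :=
          lintegral_add_right _ measurable_const
      _ = (∫⁻ ω, ENNReal.ofReal (distPhi φ S (x ω)) ∂ℙ) + ENNReal.ofReal ε := by
          simp
end

section
/- Let (X,d) be a metric space, φ : X × X → [0,∞) a Carathéodory distance, F : X → [0,∞] Borel measurable with zer F := {z ∈ X : F(z) = 0} nonempty and closed, and (Ω,𝖥,ℙ) a probability space. Let τ : [0,∞) → [0,∞) be convex and nondecreasing with τ(0) = 0 and τ(ε) > 0 for all ε > 0, and suppose τ is a modulus of φ-regularity for F, i.e. for every ε > 0 and every y ∈ X, F(y) < τ(ε) implies dist^φ_{zer F}(y) < ε. Then for every measurable random variable x : Ω → X such that dist^φ_{zer F}(x) is integrable and every ε > 0, E[F(x)] < τ(ε) implies E[dist^φ_{zer F}(x)] < ε. -/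
open MeasureTheory Set ENNReal

/-- If `τ : [0,∞) → [0,∞)` is convex, nondecreasing, `τ(0) = 0`,
`τ(ε) > 0` for `ε > 0`, and `τ` is a (pointwise) modulus of `φ`-regularity for `F`, then
for every measurable `x : Ω → X` with `dist^φ_{zer F}(x)` integrable and every `ε > 0`,
`E[F(x)] < τ(ε)` implies `E[dist^φ_{zer F}(x)] < ε`. -/
theorem stmt_7 {X : Type*} [MetricSpace X] [MeasurableSpace X] [BorelSpace X]
    (φ : X → X → ℝ) (hφ_nonneg : ∀ x y : X, 0 ≤ φ x y)
    (hφ_cont : ∀ y : X, Continuous (fun x => φ x y))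
    (hφ_meas : ∀ x : X, Measurable (fun y => φ x y))
    (F : X → ℝ≥0∞) (hF : Measurable F)
    (hzer_ne : {z : X | F z = 0}.Nonempty) (hzer_closed : IsClosed {z : X | F z = 0})
    {Ω : Type*} [MeasurableSpace Ω] (ℙ : Measure Ω) [IsProbabilityMeasure ℙ]
    (τ : ℝ → ℝ) (hτ_conv : ConvexOn ℝ (Set.Ici 0) τ)
    (hτ_mono : MonotoneOn τ (Set.Ici 0)) (hτ_zero : τ 0 = 0)
    (hτ_pos : ∀ ε > (0 : ℝ), 0 < τ ε)
    (hτ_reg : ∀ ε > (0 : ℝ), ∀ y : X,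
      F y < ENNReal.ofReal (τ ε) → distPhi φ {z : X | F z = 0} y < ε)
    (x : Ω → X) (hx : Measurable x)
    (hint : Integrable (fun ω => distPhi φ {z : X | F z = 0} (x ω)) ℙ) :
    ∀ ε > (0 : ℝ),
      (∫⁻ ω, F (x ω) ∂ℙ) < ENNReal.ofReal (τ ε) →
        (∫⁻ ω, ENNReal.ofReal (distPhi φ {z : X | F z = 0} (x ω)) ∂ℙ) <
          ENNReal.ofReal ε := by
  intro ε hε hlt
  set Z := {z : X | F z = 0} with hZ
  have hZne : Nonempty Z := hzer_ne.to_subtype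
  -- nonnegativity of distPhi
  have hg_nonneg : ∀ y : X, 0 ≤ distPhi φ Z y := fun y =>
    Real.iInf_nonneg fun s => hφ_nonneg s y
  -- pointwise bound: ofReal (τ (distPhi y)) ≤ F y
  have hpt : ∀ y : X, ENNReal.ofReal (τ (distPhi φ Z y)) ≤ F y := by
    intro y
    by_contra h
    push_neg at h
    rcases lt_or_eq_of_le (hg_nonneg y) with hd | hd
    · exact absurd (hτ_reg _ hd y h) (lt_irrefl _)
    · rw [← hd, hτ_zero] at h
      simp at h
  set g : Ω → ℝ := fun ω => distPhi φ Z (x ω) with hg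
  set m : ℝ := ∫ ω, g ω ∂ℙ with hm
  have hofg : (∫⁻ ω, ENNReal.ofReal (g ω) ∂ℙ) = ENNReal.ofReal m := by
    rw [hm, MeasureTheory.ofReal_integral_eq_lintegral_ofReal hint
      (Filter.Eventually.of_forall fun ω => hg_nonneg (x ω))]
  rw [show (∫⁻ ω, ENNReal.ofReal (distPhi φ {z : X | F z = 0} (x ω)) ∂ℙ)
      = ∫⁻ ω, ENNReal.ofReal (g ω) ∂ℙ from rfl, hofg]
  rw [ENNReal.ofReal_lt_ofReal_iff hε]
  by_contra hcon
  push_neg at hcon  -- hcon : ε ≤ m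
  -- subgradient of τ at ε
  set S : Set ℝ := (fun t => (τ ε - τ t) / (ε - t)) '' Set.Ico 0 ε with hSdef
  have hSne : S.Nonempty := ⟨_, ⟨0, ⟨le_refl 0, hε⟩, rfl⟩⟩
  have hSbdd : BddAbove S := by
    refine ⟨(τ (ε + 1) - τ ε) / (ε + 1 - ε), ?_⟩
    rintro _ ⟨t, ⟨ht0, htε⟩, rfl⟩
    exact hτ_conv.slope_mono_adjacent ht0 (le_trans hε.le (by linarith)) htε (by linarith)
  set c : ℝ := sSup S with hc
  have hc_lower : ∀ t, 0 ≤ t → t < ε → (τ ε - τ t) / (ε - t) ≤ c :=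
    fun t ht0 htε => le_csSup hSbdd ⟨t, ⟨ht0, htε⟩, rfl⟩
  have hc_pos : 0 < c := by
    have h0 : (τ ε - τ 0) / (ε - 0) ≤ c := hc_lower 0 le_rfl hε
    rw [hτ_zero, sub_zero, sub_zero] at h0
    exact lt_of_lt_of_le (div_pos (hτ_pos ε hε) hε) h0
  -- affine minorant: ∀ t ≥ 0, τ ε + c * (t - ε) ≤ τ t
  have hminor : ∀ t : ℝ, 0 ≤ t → τ ε + c * (t - ε) ≤ τ t := by
    intro t ht0
    rcases lt_trichotomy t ε with h | h | h
    · have h1 : (τ ε - τ t) / (ε - t) ≤ c := hc_lower t ht0 h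
      have h2 : 0 < ε - t := by linarith
      rw [div_le_iff₀ h2] at h1
      nlinarith
    · subst h; simp
    · have h1 : c ≤ (τ t - τ ε) / (t - ε) := by
        refine csSup_le hSne ?_
        rintro _ ⟨t', ⟨ht'0, ht'ε⟩, rfl⟩
        exact hτ_conv.slope_mono_adjacent ht'0 (le_trans hε.le h.le) ht'ε h
      have h2 : 0 < t - ε := by linarith
      rw [le_div_iff₀ h2] at h1
      nlinarith
  -- the affine function of g
  set l : Ω → ℝ := fun ω => τ ε + c * (g ω - ε) with hl
  have hl_int : Integrable l ℙ :=
    (integrable_const (τ ε)).add (((hint.sub (integrable_const ε)).const_mul c))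
  have hl_integral : ∫ ω, l ω ∂ℙ = τ ε + c * (m - ε) := by
    have h1 : Integrable (fun ω => c * (g ω - ε)) ℙ :=
      (hint.sub (integrable_const ε)).const_mul c
    rw [hl]
    rw [integral_add (f := fun _ => τ ε) (g := fun ω => c * (g ω - ε))
      (integrable_const _) h1, integral_const_mul,
      integral_sub hint (integrable_const ε), integral_const]
    simp [hm]
  have key1 : ENNReal.ofReal (τ ε) ≤ ENNReal.ofReal (∫ ω, l ω ∂ℙ) := by
    rw [hl_integral]
    apply ENNReal.ofReal_le_ofReal
    nlinarith
  have key2 : ENNReal.ofReal (∫ ω, l ω ∂ℙ) ≤ ∫⁻ ω, ENNReal.ofReal (l ω) ∂ℙ := by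
    have h1 : ∫ ω, l ω ∂ℙ ≤ ∫ ω, max (l ω) 0 ∂ℙ :=
      integral_mono hl_int hl_int.pos_part (fun ω => le_max_left _ _)
    calc ENNReal.ofReal (∫ ω, l ω ∂ℙ) ≤ ENNReal.ofReal (∫ ω, max (l ω) 0 ∂ℙ) :=
          ENNReal.ofReal_le_ofReal h1
      _ = ∫⁻ ω, ENNReal.ofReal (max (l ω) 0) ∂ℙ :=
          MeasureTheory.ofReal_integral_eq_lintegral_ofReal hl_int.pos_part
            (Filter.Eventually.of_forall fun ω => le_max_right _ _)
      _ = ∫⁻ ω, ENNReal.ofReal (l ω) ∂ℙ := by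
          congr 1; funext ω
          rcases le_total (l ω) 0 with h | h
          · simp [max_eq_right h, ENNReal.ofReal_of_nonpos h]
          · rw [max_eq_left h]
  have key3 : (∫⁻ ω, ENNReal.ofReal (l ω) ∂ℙ) ≤ ∫⁻ ω, F (x ω) ∂ℙ := by
    refine lintegral_mono fun ω => ?_
    refine le_trans (ENNReal.ofReal_le_ofReal (hminor (g ω) (hg_nonneg (x ω)))) ?_
    exact hpt (x ω)
  exact absurd (lt_of_le_of_lt (key1.trans (key2.trans key3)) hlt) (lt_irrefl _)
end

section
/- Let τ : [0,∞) → [0,∞) be strictly increasing with τ(0) = 0 and liminf_{x→∞} τ(x)/x > 0. Then the convex envelope of τ, defined by τ̌(x) := sup{ f(x) : f : [0,∞) → ℝ is convex and f ≤ τ }, is strictly increasing on [0,∞). -/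
open Set Filter

/-- The convex envelope on `[0,∞)` of `τ : [0,∞) → ℝ`:
`τ̌(x) := sup { f(x) : f convex on [0,∞) and f ≤ τ on [0,∞) }`. -/
noncomputable def convexEnvelope (τ : ℝ → ℝ) (x : ℝ) : ℝ :=
  sSup {y : ℝ | ∃ f : ℝ → ℝ, ConvexOn ℝ (Set.Ici 0) f ∧
    (∀ t : ℝ, 0 ≤ t → f t ≤ τ t) ∧ y = f x}

/-
Every convex minorant `f` of `τ` has `f 0 ≤ τ 0 = 0`, hence `f (θ x) ≤ θ f x` for `θ ∈ [0,1]`;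
taking suprema, `τ̌ (θ x) ≤ θ τ̌ x`. So `τ̌` is strictly increasing as soon as it is positive on
`(0,∞)`, and it is: a line of small positive slope through `(x/2, 0)` stays below `τ`, by
monotonicity up to some point and by the linear growth of `τ` beyond it.
-/

section

variable {τ f : ℝ → ℝ} {x : ℝ}

lemma le_convexEnvelope (hf : ConvexOn ℝ (Ici 0) f) (hfτ : ∀ t, 0 ≤ t → f t ≤ τ t)
    (hx : 0 ≤ x) : f x ≤ convexEnvelope τ x := by
  refine le_csSup ⟨τ x, ?_⟩ ⟨f, hf, hfτ, rfl⟩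
  rintro _ ⟨g, -, hgτ, rfl⟩
  exact hgτ x hx

lemma convexEnvelope_le {C : ℝ} (hτ : ∀ t, 0 ≤ t → 0 ≤ τ t)
    (h : ∀ f : ℝ → ℝ, ConvexOn ℝ (Ici 0) f → (∀ t, 0 ≤ t → f t ≤ τ t) → f x ≤ C) :
    convexEnvelope τ x ≤ C := by
  refine csSup_le ⟨0, fun _ => 0, convexOn_const 0 (convex_Ici 0), hτ, rfl⟩ ?_
  rintro _ ⟨g, hg, hgτ, rfl⟩
  exact h g hg hgτ

lemma convexEnvelope_mul_le (hτ : ∀ t, 0 ≤ t → 0 ≤ τ t) (hτ0 : τ 0 ≤ 0) {θ : ℝ} (hθ0 : 0 ≤ θ)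
    (hθ1 : θ ≤ 1) (hx : 0 ≤ x) : convexEnvelope τ (θ * x) ≤ θ * convexEnvelope τ x := by
  refine convexEnvelope_le hτ fun f hf hfτ => ?_
  have hconv := hf.2 self_mem_Ici (mem_Ici.2 hx) (sub_nonneg.2 hθ1) hθ0 (by ring)
  simp only [smul_eq_mul, mul_zero, zero_add] at hconv
  calc f (θ * x) ≤ (1 - θ) * f 0 + θ * f x := hconv
    _ ≤ θ * f x := by nlinarith [hfτ 0 le_rfl]
    _ ≤ θ * convexEnvelope τ x := by gcongr; exact le_convexEnvelope hf hfτ hx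

end

lemma exists_pos_mul_le_of_growth {τ : ℝ → ℝ} (hmono : MonotoneOn τ (Ici 0)) {s : ℝ}
    (hs : 0 < s) (hτs : 0 < τ s) (hgrowth : ∃ c > (0 : ℝ), ∀ᶠ x in atTop, c ≤ τ x / x) :
    ∃ m > 0, ∀ t, s ≤ t → m * t ≤ τ t := by
  obtain ⟨c, hc, hev⟩ := hgrowth
  obtain ⟨M₀, hM₀⟩ := eventually_atTop.1 hev
  set M := max M₀ s
  have hM : 0 < M := lt_max_of_lt_right hs
  refine ⟨min c (τ s / M), lt_min hc (div_pos hτs hM), fun t hst => ?_⟩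
  rcases le_or_gt t M with htM | hMt
  · calc min c (τ s / M) * t ≤ τ s / M * M := by
          gcongr
          · exact (hs.trans_le hst).le
          · exact min_le_right _ _
      _ = τ s := div_mul_cancel₀ _ hM.ne'
      _ ≤ τ t := hmono hs.le (hs.le.trans hst) hst
  · have ht : 0 < t := hM.trans hMt
    calc min c (τ s / M) * t ≤ c * t := by gcongr; exact min_le_left _ _
      _ ≤ τ t := (le_div_iff₀ ht).1 (hM₀ t ((le_max_left _ _).trans hMt.le))

lemma convexEnvelope_pos {τ : ℝ → ℝ} (hτ : ∀ t, 0 ≤ t → 0 ≤ τ t)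
    (hmono : MonotoneOn τ (Ici 0)) (hpos : ∀ t, 0 < t → 0 < τ t)
    (hgrowth : ∃ c > (0 : ℝ), ∀ᶠ x in atTop, c ≤ τ x / x) {x : ℝ} (hx : 0 < x) :
    0 < convexEnvelope τ x := by
  have hs : 0 < x / 2 := half_pos hx
  obtain ⟨m, hm, hmτ⟩ := exists_pos_mul_le_of_growth hmono hs (hpos _ hs) hgrowth
  have hline : ConvexOn ℝ (Ici 0) fun t => m * (t - x / 2) :=
    (((convexOn_id (𝕜 := ℝ) (convex_Ici 0)).add_const (-(x / 2))).smul hm.le).congr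
      fun t _ => by simp [sub_eq_add_neg]
  have hlineτ : ∀ t, 0 ≤ t → m * (t - x / 2) ≤ τ t := fun t ht => by
    rcases le_total (x / 2) t with hst | hts
    · nlinarith [hmτ t hst]
    · nlinarith [hτ t ht]
  calc 0 < m * (x - x / 2) := mul_pos hm (by linarith)
    _ ≤ convexEnvelope τ x := le_convexEnvelope hline hlineτ hx.le

theorem stmt_8_general (τ : ℝ → ℝ)
    (hτ_strict : StrictMonoOn τ (Set.Ici 0)) (hτ_zero : τ 0 = 0)
    (hτ_growth : ∃ c > (0 : ℝ), ∀ᶠ x in Filter.atTop, c ≤ τ x / x) :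
    StrictMonoOn (convexEnvelope τ) (Set.Ici 0) := by
  have hpos : ∀ t, 0 < t → 0 < τ t := fun t ht =>
    hτ_zero ▸ hτ_strict self_mem_Ici (mem_Ici.2 ht.le) ht
  have hnonneg : ∀ t, 0 ≤ t → 0 ≤ τ t := fun t ht =>
    ht.eq_or_lt.elim (fun h => h ▸ hτ_zero.ge) fun h => (hpos t h).le
  rintro a ha b - hab
  have hb0 : 0 < b := (mem_Ici.1 ha).trans_lt hab
  have hθ : a / b < 1 := (div_lt_one hb0).2 hab
  calc convexEnvelope τ a = convexEnvelope τ (a / b * b) := by rw [div_mul_cancel₀ a hb0.ne']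
    _ ≤ a / b * convexEnvelope τ b :=
      convexEnvelope_mul_le hnonneg hτ_zero.le (div_nonneg ha hb0.le) hθ.le hb0.le
    _ < convexEnvelope τ b := mul_lt_of_lt_one_left
      (convexEnvelope_pos hnonneg hτ_strict.monotoneOn hpos hτ_growth hb0) hθ

/-- If `τ : [0,∞) → [0,∞)` is strictly increasing with `τ(0) = 0` and
`liminf_{x→∞} τ(x)/x > 0` (i.e. `τ(x)/x ≥ c > 0` for all sufficiently large `x`), then its
convex envelope `τ̌` is strictly increasing on `[0,∞)`. -/
theorem stmt_8 (τ : ℝ → ℝ) (hτ_nonneg : ∀ x : ℝ, 0 ≤ x → 0 ≤ τ x)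
    (hτ_strict : StrictMonoOn τ (Set.Ici 0)) (hτ_zero : τ 0 = 0)
    (hτ_growth : ∃ c > (0 : ℝ), ∀ᶠ x in Filter.atTop, c ≤ τ x / x) :
    StrictMonoOn (convexEnvelope τ) (Set.Ici 0) :=
  stmt_8_general τ hτ_strict hτ_zero hτ_growth
end

section
/- Let (T,𝖳,μ) be a σ-finite measure space, (X,d) a metric space, φ : X × X → [0,∞) a Carathéodory distance, and h : T × X → [0,∞] a Carathéodory function; set F(z) := ∫ h(t,z) dμ(t) and assume zer F := {z ∈ X : F(z) = 0} is nonempty and closed. Let τ, σ : [0,∞) → [0,∞) be nondecreasing with τ(0) = σ(0) = 0 and τ(ε), σ(ε) > 0 for all ε > 0. If μ({t ∈ T : h(t,x) ≥ τ(dist^φ_{zer F}(x))}) ≥ σ(dist^φ_{zer F}(x)) for all x ∈ X, then the function ε ↦ σ(ε)·τ(ε) is a modulus of φ-regularity for F, i.e. for every ε > 0 and every x ∈ X, F(x) < σ(ε)τ(ε) implies dist^φ_{zer F}(x) < ε. -/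
open MeasureTheory Set ENNReal

/-! If `F x < σ(ε)τ(ε)` but `d := dist^φ_{zer F}(x) ≥ ε`, then by monotonicity and Markov's
inequality `σ(ε)τ(ε) ≤ τ(d)·σ(d) ≤ τ(d)·μ{τ(d) ≤ h(·,x)} ≤ ∫ h(t,x) dμ(t) = F x`, a
contradiction. -/

theorem mul_le_lintegral_of_le_measure {T : Type*} [MeasurableSpace T] {μ : Measure T}
    {f : T → ℝ≥0∞} (hf : AEMeasurable f μ) {c s : ℝ≥0∞} (hs : s ≤ μ {t | c ≤ f t}) :
    c * s ≤ ∫⁻ t, f t ∂μ :=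
  (mul_le_mul_right hs c).trans (mul_meas_ge_le_lintegral₀ hf c)

theorem ofReal_mul_le_ofReal_mul_ofReal_of_le {τ σ : ℝ → ℝ}
    (hτ_mono : MonotoneOn τ (Ici 0)) (hσ_mono : MonotoneOn σ (Ici 0))
    {ε d : ℝ} (hε : 0 ≤ ε) (hτε : 0 ≤ τ ε) (hεd : ε ≤ d) :
    ENNReal.ofReal (σ ε * τ ε) ≤ ENNReal.ofReal (τ d) * ENNReal.ofReal (σ d) := by
  have hd : d ∈ Ici (0 : ℝ) := hε.trans hεd
  rw [ENNReal.ofReal_mul' hτε, mul_comm]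
  gcongr
  exacts [hτ_mono hε hd hεd, hσ_mono hε hd hεd]

theorem stmt_9_general {T : Type*} [MeasurableSpace T] (μ : Measure T)
    {X : Type*}
    (φ : X → X → ℝ)
    (h : T → X → ℝ≥0∞)
    (hh_meas : ∀ x : X, Measurable (fun t => h t x))
    (F : X → ℝ≥0∞) (hFdef : ∀ z : X, F z = ∫⁻ t, h t z ∂μ)
    (τ σ : ℝ → ℝ)
    (hτ_mono : MonotoneOn τ (Set.Ici 0)) (hσ_mono : MonotoneOn σ (Set.Ici 0))
    (hτ_pos : ∀ ε > (0 : ℝ), 0 < τ ε)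
    (hmain : ∀ x : X,
      ENNReal.ofReal (σ (distPhi φ {z : X | F z = 0} x)) ≤
        μ {t : T | ENNReal.ofReal (τ (distPhi φ {z : X | F z = 0} x)) ≤ h t x}) :
    ∀ ε > (0 : ℝ), ∀ x : X,
      F x < ENNReal.ofReal (σ ε * τ ε) → distPhi φ {z : X | F z = 0} x < ε := by
  intro ε hε x hFx
  by_contra! hεd
  have markov := mul_le_lintegral_of_le_measure (hh_meas x).aemeasurable (hmain x)
  have hmono := ofReal_mul_le_ofReal_mul_ofReal_of_le hτ_mono hσ_mono hε.le
    (hτ_pos ε hε).le hεd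
  exact (hFx.trans_le (hmono.trans (hFdef x ▸ markov))).false

/-- Let `h : T × X → [0,∞]` be a Carathéodory function over a σ-finite
measure space, `F(z) := ∫ h(t,z) dμ(t)` with `zer F` nonempty and closed, and `τ, σ`
nondecreasing with `τ(0) = σ(0) = 0`, positive on `(0,∞)`. If
`μ({t : h(t,x) ≥ τ(dist^φ_{zer F}(x))}) ≥ σ(dist^φ_{zer F}(x))` for all `x`, then
`ε ↦ σ(ε)·τ(ε)` is a modulus of `φ`-regularity for `F`. -/
theorem stmt_9 {T : Type*} [MeasurableSpace T] (μ : Measure T) [SigmaFinite μ]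
    {X : Type*} [MetricSpace X] [MeasurableSpace X] [BorelSpace X]
    (φ : X → X → ℝ) (hφ_nonneg : ∀ x y : X, 0 ≤ φ x y)
    (hφ_cont : ∀ y : X, Continuous (fun x => φ x y))
    (hφ_meas : ∀ x : X, Measurable (fun y => φ x y))
    (h : T → X → ℝ≥0∞)
    (hh_meas : ∀ x : X, Measurable (fun t => h t x))
    (hh_cont : ∀ t : T, Continuous (h t))
    (F : X → ℝ≥0∞) (hFdef : ∀ z : X, F z = ∫⁻ t, h t z ∂μ)
    (hzer_ne : {z : X | F z = 0}.Nonempty) (hzer_closed : IsClosed {z : X | F z = 0})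
    (τ σ : ℝ → ℝ)
    (hτ_mono : MonotoneOn τ (Set.Ici 0)) (hσ_mono : MonotoneOn σ (Set.Ici 0))
    (hτ_zero : τ 0 = 0) (hσ_zero : σ 0 = 0)
    (hτ_pos : ∀ ε > (0 : ℝ), 0 < τ ε) (hσ_pos : ∀ ε > (0 : ℝ), 0 < σ ε)
    (hmain : ∀ x : X,
      ENNReal.ofReal (σ (distPhi φ {z : X | F z = 0} x)) ≤
        μ {t : T | ENNReal.ofReal (τ (distPhi φ {z : X | F z = 0} x)) ≤ h t x}) :
    ∀ ε > (0 : ℝ), ∀ x : X,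
      F x < ENNReal.ofReal (σ ε * τ ε) → distPhi φ {z : X | F z = 0} x < ε :=
  stmt_9_general μ φ h hh_meas F hFdef τ σ hτ_mono hσ_mono hτ_pos hmain
end

section
/- Let (x_n), (α_n), (β_n), (γ_n) be sequences of nonnegative reals with x_{n+1} ≤ (1+α_n)x_n − β_n + γ_n for all n ∈ ℕ. If ∏_{i=0}^∞ (1+α_i) < ∞ and ∑_{i=0}^∞ γ_i < ∞, then (x_n) converges and ∑_{i=0}^∞ β_i < ∞. Moreover, if K, L, M > 0 satisfy x_0 < K, ∏_{i=0}^∞ (1+α_i) < L and ∑_{i=0}^∞ γ_i < M, then ∑_{i=0}^∞ β_i < L·(K+M). -/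
open Filter

/-- (Quantitative Qihou lemma.) Let `(x_n), (α_n), (β_n), (γ_n)` be
nonnegative real sequences with `x_{n+1} ≤ (1+α_n)x_n − β_n + γ_n` for all `n`. If
`∏ (1+α_i) < ∞` (equivalently `∑ α_i < ∞`) and `∑ γ_i < ∞`, then `(x_n)` converges and
`∑ β_i < ∞`; moreover, if `K, L, M > 0` satisfy `x_0 < K`, `∏ (1+α_i) < L` and
`∑ γ_i < M`, then `∑ β_i < L·(K+M)`. -/
theorem stmt_17 (x α β γ : ℕ → ℝ)
    (hx : ∀ n, 0 ≤ x n) (hα : ∀ n, 0 ≤ α n) (hβ : ∀ n, 0 ≤ β n) (hγ : ∀ n, 0 ≤ γ n)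
    (hrec : ∀ n : ℕ, x (n + 1) ≤ (1 + α n) * x n - β n + γ n)
    (hαsum : Summable α) (hγsum : Summable γ) :
    ((∃ l : ℝ, Filter.Tendsto x Filter.atTop (nhds l)) ∧ Summable β) ∧
      (∀ K L M : ℝ, 0 < K → 0 < L → 0 < M → x 0 < K →
        (⨆ N : ℕ, ∏ i ∈ Finset.range N, ENNReal.ofReal (1 + α i)) < ENNReal.ofReal L →
        (∑' i : ℕ, γ i) < M →
        (∑' i : ℕ, β i) < L * (K + M)) := by
  -- partial products
  set P : ℕ → ℝ := fun n => ∏ i ∈ Finset.range n, (1 + α i) with hPdef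
  have hPsucc : ∀ n, P (n + 1) = P n * (1 + α n) := by
    intro n; simp [hPdef, Finset.prod_range_succ]
  have hP1 : ∀ n, 1 ≤ P n := by
    intro n
    induction n with
    | zero => simp [hPdef]
    | succ n ih => rw [hPsucc n]; nlinarith [hα n]
  have hPpos : ∀ n, 0 < P n := fun n => lt_of_lt_of_le one_pos (hP1 n)
  have hPmono : Monotone P := by
    apply monotone_nat_of_le_succ
    intro n
    rw [hPsucc n]
    nlinarith [hPpos n, hα n]
  have hPbdd : ∀ n, P n ≤ Real.exp (∑' i, α i) := by
    intro n
    have h1 : P n ≤ ∏ i ∈ Finset.range n, Real.exp (α i) := by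
      apply Finset.prod_le_prod
      · intro i _; linarith [hα i]
      · intro i _; linarith [Real.add_one_le_exp (α i)]
    rw [← Real.exp_sum] at h1
    refine h1.trans (Real.exp_le_exp.2 ?_)
    exact Summable.sum_le_tsum _ (fun i _ => hα i) hαsum
  have hbddAbove : BddAbove (Set.range P) := by
    refine ⟨Real.exp (∑' i, α i), ?_⟩
    rintro _ ⟨n, rfl⟩; exact hPbdd n
  set p : ℝ := ⨆ n, P n with hpdef
  have hPle : ∀ n, P n ≤ p := fun n => le_ciSup hbddAbove n
  have hp1 : 1 ≤ p := (hP1 0).trans (hPle 0)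
  have hPtend : Tendsto P atTop (nhds p) := tendsto_atTop_ciSup hPmono hbddAbove
  -- normalized sequence
  set y : ℕ → ℝ := fun n => x n / P n with hydef
  have hy0 : ∀ n, 0 ≤ y n := fun n => div_nonneg (hx n) (hPpos n).le
  have hkey : ∀ n, y (n + 1) + β n / P (n + 1) ≤ y n + γ n := by
    intro n
    have hPn := hPpos n
    have hPn1 := hPpos (n + 1)
    have hPs := hPsucc n
    have hc : x n / P n * P n = x n := div_mul_cancel₀ _ (ne_of_gt hPn)
    have : (x (n + 1) + β n) / P (n + 1) ≤ x n / P n + γ n := by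
      rw [div_le_iff₀ hPn1, hPs]
      have hc2 : x n / P n * (P n * (1 + α n)) = x n * (1 + α n) := by
        rw [← mul_assoc, hc]
      have hg : γ n ≤ γ n * (P n * (1 + α n)) :=
        le_mul_of_one_le_right (hγ n) (by nlinarith [hP1 n, hα n])
      rw [add_mul, hc2]
      nlinarith [hrec n, hg]
    calc y (n + 1) + β n / P (n + 1) = (x (n + 1) + β n) / P (n + 1) := by
          simp [hydef, add_div]
      _ ≤ x n / P n + γ n := this
      _ = y n + γ n := rfl
  have hy_dec : ∀ n, y (n + 1) ≤ y n + γ n := by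
    intro n
    have := hkey n
    have h2 : 0 ≤ β n / P (n + 1) := div_nonneg (hβ n) (hPpos (n + 1)).le
    linarith
  -- telescoping bound
  have hT : ∀ n, y n + ∑ i ∈ Finset.range n, β i / P (i + 1) ≤
      y 0 + ∑ i ∈ Finset.range n, γ i := by
    intro n
    induction n with
    | zero => simp
    | succ n ih =>
      rw [Finset.sum_range_succ, Finset.sum_range_succ]
      have := hkey n
      linarith
  have hy00 : y 0 = x 0 := by simp [hydef, hPdef]
  set C : ℝ := x 0 + ∑' i, γ i with hCdef
  have hC : ∀ n, ∑ i ∈ Finset.range n, β i / P (i + 1) ≤ C := by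
    intro n
    have h1 := hT n
    have h2 : ∑ i ∈ Finset.range n, γ i ≤ ∑' i, γ i :=
      Summable.sum_le_tsum _ (fun i _ => hγ i) hγsum
    have h3 := hy0 n
    rw [hy00] at h1
    linarith
  have hβsum_bound : ∀ n, ∑ i ∈ Finset.range n, β i ≤ p * C := by
    intro n
    have h1 : ∑ i ∈ Finset.range n, β i ≤ ∑ i ∈ Finset.range n, p * (β i / P (i + 1)) := by
      apply Finset.sum_le_sum
      intro i _
      have hPi := hPpos (i + 1)
      rw [← mul_div_assoc, le_div_iff₀ hPi]
      nlinarith [hPle (i + 1), hβ i]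
    rw [← Finset.mul_sum] at h1
    refine h1.trans ?_
    have hCnn : 0 ≤ ∑ i ∈ Finset.range n, β i / P (i + 1) :=
      Finset.sum_nonneg fun i _ => div_nonneg (hβ i) (hPpos (i + 1)).le
    exact mul_le_mul_of_nonneg_left (hC n) (by linarith)
  have hβsum : Summable β := summable_of_sum_range_le hβ hβsum_bound
  have hβtsum : (∑' i, β i) ≤ p * C := Summable.tsum_le_of_sum_range_le hβsum hβsum_bound
  -- convergence of x
  have hxconv : ∃ l : ℝ, Tendsto x atTop (nhds l) := by
    set G : ℕ → ℝ := fun n => ∑' k, γ (k + n) with hGdef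
    have hGtend : Tendsto G atTop (nhds 0) := tendsto_sum_nat_add γ
    have hGsumm : ∀ n, Summable fun k => γ (k + n) := fun n =>
      (summable_nat_add_iff n).2 hγsum
    have hGsplit : ∀ n, G n = γ n + G (n + 1) := by
      intro n
      have := Summable.tsum_eq_zero_add (hGsumm n)
      rw [hGdef]
      simp only
      rw [this]
      congr 1
      · simp
      · apply tsum_congr; intro b; congr 1; omega
    set z : ℕ → ℝ := fun n => y n + G n with hzdef
    have hzanti : Antitone z := by
      apply antitone_nat_of_succ_le
      intro n
      have h1 := hy_dec n
      have h2 := hGsplit n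
      simp only [hzdef]
      linarith
    have hzbdd : BddBelow (Set.range z) := by
      refine ⟨0, ?_⟩
      rintro _ ⟨n, rfl⟩
      have : 0 ≤ G n := tsum_nonneg fun k => hγ (k + n)
      have := hy0 n
      simp only [hzdef]
      linarith
    have hztend : Tendsto z atTop (nhds (⨅ n, z n)) := tendsto_atTop_ciInf hzanti hzbdd
    have hytend : Tendsto y atTop (nhds ((⨅ n, z n) - 0)) := by
      have : y = fun n => z n - G n := by
        funext n; simp [hzdef]
      rw [this]
      exact hztend.sub hGtend
    refine ⟨((⨅ n, z n) - 0) * p, ?_⟩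
    have : x = fun n => y n * P n := by
      funext n
      simp [hydef, div_mul_cancel₀ _ (ne_of_gt (hPpos n))]
    rw [this]
    exact hytend.mul hPtend
  refine ⟨⟨hxconv, hβsum⟩, ?_⟩
  -- quantitative part
  intro K L M hK hL hM hx0 hprodL hγM
  have hpleL : p ≤ L := by
    apply ciSup_le
    intro n
    have h1 : ENNReal.ofReal (P n) = ∏ i ∈ Finset.range n, ENNReal.ofReal (1 + α i) :=
      ENNReal.ofReal_prod_of_nonneg fun i _ => by linarith [hα i]
    have h2 : ENNReal.ofReal (P n) < ENNReal.ofReal L := by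
      rw [h1]
      exact lt_of_le_of_lt (le_iSup (fun N => ∏ i ∈ Finset.range N, ENNReal.ofReal (1 + α i)) n) hprodL
    have := (ENNReal.ofReal_lt_ofReal_iff hL).1 h2
    linarith
  have htγ : 0 ≤ ∑' i, γ i := tsum_nonneg hγ
  calc (∑' i, β i) ≤ p * C := hβtsum
    _ < p * (K + M) := by
        apply mul_lt_mul_of_pos_left _ (by linarith)
        simp only [hCdef]
        linarith
    _ ≤ L * (K + M) := by
        apply mul_le_mul_of_nonneg_right hpleL (by linarith)
end
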